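/- arXiv:2312.17037 — 3 statements merged into one kernel-verified Lean document; each statement's English description precedes it below -/
import Mathlib

section
/- For d ≥ 2, let U := I_{d²} − (2/d)·|Ω⟩⟨Ω| with Ω := Σ_{i=1}^{d} e_i ⊗ e_i ∈ ℂ^{d·d}. Then (d−2)/d is the least element of the set { |⟨ψ1⊗ψ2, U(ψ1⊗ψ2)⟩| : ψ1, ψ2 ∈ ℂ^d, ‖ψ1‖ = ‖ψ2‖ = 1 }; the minimum is attained at ψ1 = ψ2 = e_1. That is, z_{d:d}(U) = (d−2)/d. -/
/-!
On product vectors, `U = 1 - (2/d)|Ω⟩⟨Ω|` takes the real values `1 - (2/d)|⟨Ω, ψ1⊗ψ2⟩|²`, and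
`⟨Ω, ψ1⊗ψ2⟩ = Σ_i (ψ1)_i (ψ2)_i` is the bilinear (not sesquilinear) pairing of `ψ1` and `ψ2`.
Cauchy–Schwarz bounds it by `1` for unit vectors, with equality at `ψ1 = ψ2 = e_1`, and `d ≥ 2`
keeps all these values nonnegative, so their least modulus is `1 - 2/d`.
-/

open Matrix
open scoped ComplexInnerProductSpace

/-- The tensor (Kronecker) product of two vectors: `(ψ1 ⊗ ψ2)_{(i,j)} = (ψ1)_i · (ψ2)_j`. -/
noncomputable def tensorVec {d1 d2 : ℕ} (ψ1 : EuclideanSpace ℂ (Fin d1))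
    (ψ2 : EuclideanSpace ℂ (Fin d2)) : EuclideanSpace ℂ (Fin d1 × Fin d2) :=
  WithLp.toLp 2 (fun p : Fin d1 × Fin d2 => ψ1 p.1 * ψ2 p.2)

/-- The unnormalized maximally entangled vector `Ω = Σ_i e_i ⊗ e_i ∈ ℂ^{d·d}`,
with entries `Ω_{(i,j)} = δ_{i,j}`. -/
noncomputable def maxEnt (d : ℕ) : Fin d × Fin d → ℂ :=
  fun p => if p.1 = p.2 then 1 else 0

/-- The extremal unitary `U = I_{d²} - (2/d)·|Ω⟩⟨Ω|`, where `|Ω⟩⟨Ω|` is the rank-one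
matrix with entries `Ω_i · conj(Ω_j)`. -/
noncomputable def extremalU (d : ℕ) : Matrix (Fin d × Fin d) (Fin d × Fin d) ℂ :=
  1 - ((2 : ℂ) / d) • Matrix.vecMulVec (maxEnt d) (star (maxEnt d))

section RankOnePerturbation

variable {n : Type*} [Fintype n] [DecidableEq n]

lemma toEuclideanLin_vecMulVec_star (w : n → ℂ) (v : EuclideanSpace ℂ n) :
    toEuclideanLin (vecMulVec w (star w)) v = ⟪WithLp.toLp 2 w, v⟫ • WithLp.toLp 2 w := by
  rw [← InnerProductSpace.symm_toEuclideanLin_rankOne (WithLp.toLp 2 w) (WithLp.toLp 2 w)]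
  simp

lemma inner_toEuclideanLin_one_sub_smul_vecMulVec_star (c : ℂ) (w : n → ℂ)
    (v : EuclideanSpace ℂ n) :
    ⟪v, toEuclideanLin (1 - c • vecMulVec w (star w)) v⟫ =
      (‖v‖ : ℂ) ^ 2 - c * ‖⟪WithLp.toLp 2 w, v⟫‖ ^ 2 := by
  rw [map_sub, map_smul, toLpLin_one, LinearMap.sub_apply, LinearMap.smul_apply,
    LinearMap.id_apply, toEuclideanLin_vecMulVec_star, inner_sub_right, inner_smul_right,
    inner_smul_right, inner_self_eq_norm_sq_to_K, ← inner_conj_symm v, Complex.mul_conj']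
  rfl

end RankOnePerturbation

lemma norm_sum_mul_le {𝕜 ι : Type*} [RCLike 𝕜] [Fintype ι] (x y : EuclideanSpace 𝕜 ι) :
    ‖∑ i, x i * y i‖ ≤ ‖x‖ * ‖y‖ := by
  rw [EuclideanSpace.norm_eq, EuclideanSpace.norm_eq]
  calc ‖∑ i, x i * y i‖ ≤ ∑ i, ‖x i‖ * ‖y i‖ := by
        simpa only [norm_mul] using norm_sum_le Finset.univ fun i => x i * y i
    _ ≤ _ := Real.sum_mul_le_sqrt_mul_sqrt _ _ _

lemma norm_tensorVec {d1 d2 : ℕ} (ψ1 : EuclideanSpace ℂ (Fin d1))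
    (ψ2 : EuclideanSpace ℂ (Fin d2)) : ‖tensorVec ψ1 ψ2‖ = ‖ψ1‖ * ‖ψ2‖ := by
  refine (pow_left_inj₀ (norm_nonneg _) (by positivity) two_ne_zero).mp ?_
  simp only [EuclideanSpace.norm_sq_eq, mul_pow, Fintype.sum_prod_type, Finset.sum_mul_sum,
    tensorVec, norm_mul]

lemma inner_maxEnt_tensorVec {d : ℕ} (ψ1 ψ2 : EuclideanSpace ℂ (Fin d)) :
    ⟪WithLp.toLp 2 (maxEnt d), tensorVec ψ1 ψ2⟫ = ∑ i, ψ1 i * ψ2 i := by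
  simp [PiLp.inner_apply, maxEnt, tensorVec, Fintype.sum_prod_type]

lemma inner_tensorVec_extremalU (d : ℕ) (ψ1 ψ2 : EuclideanSpace ℂ (Fin d)) :
    ⟪tensorVec ψ1 ψ2, toEuclideanLin (extremalU d) (tensorVec ψ1 ψ2)⟫ =
      (((‖ψ1‖ * ‖ψ2‖) ^ 2 - 2 / d * ‖∑ i, ψ1 i * ψ2 i‖ ^ 2 : ℝ) : ℂ) := by
  rw [extremalU, inner_toEuclideanLin_one_sub_smul_vecMulVec_star, inner_maxEnt_tensorVec,
    norm_tensorVec]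
  push_cast
  rfl

lemma norm_inner_tensorVec_extremalU {d : ℕ} (hd : 2 ≤ d) {ψ1 ψ2 : EuclideanSpace ℂ (Fin d)}
    (h1 : ‖ψ1‖ = 1) (h2 : ‖ψ2‖ = 1) :
    ‖⟪tensorVec ψ1 ψ2, toEuclideanLin (extremalU d) (tensorVec ψ1 ψ2)⟫‖ =
      1 - 2 / d * ‖∑ i, ψ1 i * ψ2 i‖ ^ 2 := by
  have hs : ‖∑ i, ψ1 i * ψ2 i‖ ≤ 1 := by simpa [h1, h2] using norm_sum_mul_le ψ1 ψ2
  have hd' : (2 : ℝ) / d ≤ 1 := div_le_one_of_le₀ (by exact_mod_cast hd) (Nat.cast_nonneg d)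
  rw [inner_tensorVec_extremalU, h1, h2, Complex.norm_real, Real.norm_eq_abs, abs_of_nonneg]
  · ring
  · have := pow_le_one₀ (norm_nonneg _) hs (n := 2)
    nlinarith

/-- For `d ≥ 2`, the value `(d-2)/d` is the least element of
`{ |⟨ψ1⊗ψ2, U(ψ1⊗ψ2)⟩| : ‖ψ1‖ = ‖ψ2‖ = 1 }`, i.e. `z_{d:d}(U) = (d-2)/d`, and the
minimum is attained at `ψ1 = ψ2 = e_1`. -/
theorem stmt9 (d : ℕ) (hd : 2 ≤ d) :
    IsLeast
      {r : ℝ | ∃ ψ1 ψ2 : EuclideanSpace ℂ (Fin d), ‖ψ1‖ = 1 ∧ ‖ψ2‖ = 1 ∧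
        r = ‖⟪tensorVec ψ1 ψ2, Matrix.toEuclideanLin (extremalU d) (tensorVec ψ1 ψ2)⟫‖}
      (((d : ℝ) - 2) / d) ∧
    ‖⟪tensorVec (EuclideanSpace.single (⟨0, by omega⟩ : Fin d) (1 : ℂ))
            (EuclideanSpace.single (⟨0, by omega⟩ : Fin d) (1 : ℂ)),
          Matrix.toEuclideanLin (extremalU d)
            (tensorVec (EuclideanSpace.single (⟨0, by omega⟩ : Fin d) (1 : ℂ))
              (EuclideanSpace.single (⟨0, by omega⟩ : Fin d) (1 : ℂ)))⟫‖ =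
      ((d : ℝ) - 2) / d := by
  have hmin : ((d : ℝ) - 2) / d = 1 - 2 / d * 1 ^ 2 := by field_simp
  set e : EuclideanSpace ℂ (Fin d) := EuclideanSpace.single ⟨0, by omega⟩ 1
  have he : ‖e‖ = 1 := by simp [e]
  have hattained :
      ‖⟪tensorVec e e, toEuclideanLin (extremalU d) (tensorVec e e)⟫‖ = ((d : ℝ) - 2) / d := by
    rw [norm_inner_tensorVec_extremalU hd he he, hmin]
    simp [e]
  refine ⟨⟨⟨e, e, he, he, hattained.symm⟩, ?_⟩, hattained⟩
  rintro _ ⟨ψ1, ψ2, h1, h2, rfl⟩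
  have hs : ‖∑ i, ψ1 i * ψ2 i‖ ≤ 1 := by simpa [h1, h2] using norm_sum_mul_le ψ1 ψ2
  rw [norm_inner_tensorVec_extremalU hd h1 h2, hmin]
  gcongr
end

section
/- Let V be an n×n complex unitary matrix with an orthonormal eigenbasis x_1, …, x_n and corresponding eigenvalues λ_1, …, λ_n, and let Q be an n×n positive definite Hermitian matrix. If there exists a probability vector (p_i)_{i=1}^n (p_i ≥ 0, Σ_i p_i = 1) with Σ_i p_i·λ_i = 0, then there exists a probability vector (q_i)_{i=1}^n with Σ_i q_i·⟨x_i, (V·Q)·x_i⟩ = 0; moreover ⟨x_i, (V·Q)·x_i⟩ = λ_i·⟨x_i, Q·x_i⟩ with ⟨x_i, Q·x_i⟩ > 0 for each i, and consequently 0 lies in the convex hull of the numerical range W(V·Q) = {⟨x, (V·Q)·x⟩ : ‖x‖ = 1}. -/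
open Matrix
open scoped ComplexInnerProductSpace ComplexOrder

/-- Numerical range `W(X) = {⟨ψ, Xψ⟩ : ‖ψ‖ = 1}`. -/
noncomputable def numRange {n : ℕ} (X : Matrix (Fin n) (Fin n) ℂ) : Set ℂ :=
  {z | ∃ ψ : EuclideanSpace ℂ (Fin n), ‖ψ‖ = 1 ∧ ⟪ψ, Matrix.toEuclideanLin X ψ⟫ = z}

/-!
An eigenvector `x` of a unitary `V` with eigenvalue `λ` is an eigenvector of `Vᴴ` with eigenvalue
`conj λ` (as `|λ| = 1`), so `⟪x, V Q x⟫ = ⟪Vᴴ x, Q x⟫ = λ ⟪x, Q x⟫` with `⟪x, Q x⟫ > 0`.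
Dividing the weights `p i` by the positive numbers `⟪x i, Q x i⟫` and renormalising turns the
vanishing convex combination of the `λ i` into one of the values `⟪x i, V Q x i⟫ ∈ W(V Q)`.
-/

open scoped InnerProductSpace ComplexConjugate

section
variable {𝕜 E : Type*} [RCLike 𝕜] [NormedAddCommGroup E] [InnerProductSpace 𝕜 E]
  [FiniteDimensional 𝕜 E]

theorem LinearMap.adjoint_apply_eq_conj_smul_of_apply_eq_smul {T : E →ₗ[𝕜] E}
    (hT : ∀ v, T.adjoint (T v) = v) {v : E} (hv : v ≠ 0) {μ : 𝕜} (hμ : T v = μ • v) :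
    T.adjoint v = conj μ • v := by
  have hback : μ • T.adjoint v = v := by rw [← map_smul, ← hμ, hT]
  have hμ_unit : conj μ * μ = 1 := by
    have h : 1 * ⟪v, v⟫_𝕜 = conj μ * μ * ⟪v, v⟫_𝕜 :=
      calc 1 * ⟪v, v⟫_𝕜 = ⟪T.adjoint (T v), v⟫_𝕜 := by rw [hT, one_mul]
        _ = ⟪T v, T v⟫_𝕜 := T.adjoint_inner_left v (T v)
        _ = conj μ * μ * ⟪v, v⟫_𝕜 := by rw [hμ, inner_smul_left, inner_smul_right, mul_assoc]
    exact (mul_right_cancel₀ (inner_self_ne_zero.mpr hv) h).symm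
  calc T.adjoint v = (conj μ * μ) • T.adjoint v := by rw [hμ_unit, one_smul]
    _ = conj μ • v := by rw [mul_smul, hback]

end

section
variable {𝕜 n : Type*} [RCLike 𝕜] [Fintype n] [DecidableEq n]

theorem Matrix.inner_toEuclideanLin_mul_of_mem_unitaryGroup {V : Matrix n n 𝕜}
    (hV : V ∈ unitaryGroup n 𝕜) (A : Matrix n n 𝕜) {v : EuclideanSpace 𝕜 n} (hv : v ≠ 0)
    {μ : 𝕜} (hμ : toEuclideanLin V v = μ • v) (u : EuclideanSpace 𝕜 n) :
    ⟪v, toEuclideanLin (V * A) u⟫_𝕜 = μ * ⟪v, toEuclideanLin A u⟫_𝕜 := by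
  have hVV : ∀ w, (toEuclideanLin V).adjoint (toEuclideanLin V w) = w := fun w => by
    rw [← toEuclideanLin_conjTranspose_eq_adjoint, ← LinearMap.comp_apply, ← toLpLin_mul_same,
      ← star_eq_conjTranspose, Unitary.star_mul_self_of_mem hV, toLpLin_one, LinearMap.id_apply]
  have hadj := LinearMap.adjoint_apply_eq_conj_smul_of_apply_eq_smul hVV hv hμ
  rw [toLpLin_mul_same, LinearMap.comp_apply, ← LinearMap.adjoint_inner_left, hadj,
    inner_smul_left, RCLike.conj_conj]

theorem Matrix.PosDef.inner_toEuclideanLin_self_pos {Q : Matrix n n 𝕜} (hQ : Q.PosDef)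
    {v : EuclideanSpace 𝕜 n} (hv : v ≠ 0) : 0 < ⟪v, toEuclideanLin Q v⟫_𝕜 := by
  rw [EuclideanSpace.inner_eq_star_dotProduct, ofLp_toLpLin, toLin'_apply, dotProduct_comm]
  exact hQ.dotProduct_mulVec_pos (by simpa using hv)

end

theorem exists_sum_smul_rescale_eq_zero {ι E : Type*} [Fintype ι] [AddCommGroup E] [Module ℝ E]
    {p : ι → ℝ} (hp0 : ∀ i, 0 ≤ p i) (hp1 : ∑ i, p i = 1) {a : ι → E}
    (ha : ∑ i, p i • a i = 0) {r : ι → ℝ} (hr : ∀ i, 0 < r i) :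
    ∃ q : ι → ℝ, (∀ i, 0 ≤ q i) ∧ ∑ i, q i = 1 ∧ ∑ i, q i • (r i • a i) = 0 := by
  set T := ∑ i, p i / r i
  have hT : 0 < T := by
    obtain ⟨i, -, hi⟩ := Finset.exists_lt_of_sum_lt (s := Finset.univ) (f := fun _ => (0 : ℝ))
      (g := p) (by simp [hp1])
    exact Finset.sum_pos' (fun j _ => div_nonneg (hp0 j) (hr j).le)
      ⟨i, Finset.mem_univ i, div_pos hi (hr i)⟩
  refine ⟨fun i => p i / r i / T, fun i => div_nonneg (div_nonneg (hp0 i) (hr i).le) hT.le,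
    by rw [← Finset.sum_div, div_self hT.ne'], ?_⟩
  calc ∑ i, (p i / r i / T) • (r i • a i) = T⁻¹ • ∑ i, p i • a i := by
        rw [Finset.smul_sum]
        refine Finset.sum_congr rfl fun i _ => ?_
        rw [smul_smul, smul_smul]
        congr 1
        field_simp [(hr i).ne']
    _ = 0 := by rw [ha, smul_zero]

/-- Let `V` be unitary with orthonormal eigenbasis `x_i` and eigenvalues
`λ_i`, and let `Q` be positive definite Hermitian. If a probability vector `p` satisfies
`Σ_i p_i λ_i = 0`, then: each diagonal value satisfies
`⟨x_i, (V·Q) x_i⟩ = λ_i ⟨x_i, Q x_i⟩` with `⟨x_i, Q x_i⟩` a positive real; there is a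
probability vector `q` with `Σ_i q_i ⟨x_i, (V·Q) x_i⟩ = 0`; and consequently `0` lies in
the convex hull of the numerical range `W(V·Q)`. -/
theorem stmt11 {n : ℕ} (V Q : Matrix (Fin n) (Fin n) ℂ)
    (hV : V ∈ Matrix.unitaryGroup (Fin n) ℂ)
    (x : Fin n → EuclideanSpace ℂ (Fin n)) (hx : Orthonormal ℂ x)
    (lam : Fin n → ℂ)
    (heig : ∀ i, Matrix.toEuclideanLin V (x i) = lam i • x i)
    (hQ : Q.PosDef)
    (p : Fin n → ℝ) (hp0 : ∀ i, 0 ≤ p i) (hp1 : ∑ i, p i = 1)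
    (hpl : ∑ i, (p i : ℂ) * lam i = 0) :
    (∀ i, ⟪x i, Matrix.toEuclideanLin (V * Q) (x i)⟫ =
        lam i * ⟪x i, Matrix.toEuclideanLin Q (x i)⟫ ∧
      ∃ r : ℝ, 0 < r ∧ ⟪x i, Matrix.toEuclideanLin Q (x i)⟫ = (r : ℂ)) ∧
    (∃ q : Fin n → ℝ, (∀ i, 0 ≤ q i) ∧ ∑ i, q i = 1 ∧
      ∑ i, (q i : ℂ) * ⟪x i, Matrix.toEuclideanLin (V * Q) (x i)⟫ = 0) ∧
    (0 : ℂ) ∈ convexHull ℝ (numRange (V * Q)) := by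
  have hdiag : ∀ i, ⟪x i, toEuclideanLin (V * Q) (x i)⟫ = lam i * ⟪x i, toEuclideanLin Q (x i)⟫ :=
    fun i => inner_toEuclideanLin_mul_of_mem_unitaryGroup hV Q (hx.ne_zero i) (heig i) (x i)
  have hQx : ∀ i, ∃ r : ℝ, 0 < r ∧ ⟪x i, toEuclideanLin Q (x i)⟫ = (r : ℂ) := fun i => by
    obtain ⟨r, hr, hr_eq⟩ :=
      RCLike.pos_iff_exists_ofReal.mp (hQ.inner_toEuclideanLin_self_pos (hx.ne_zero i))
    exact ⟨r, hr, hr_eq.symm⟩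
  choose r hr hr_eq using hQx
  have hrescale : ∀ i, (r i : ℂ) * lam i = ⟪x i, toEuclideanLin (V * Q) (x i)⟫ := fun i => by
    rw [hdiag, hr_eq, mul_comm]
  obtain ⟨q, hq0, hq1, hq⟩ := exists_sum_smul_rescale_eq_zero hp0 hp1 (a := lam)
    (by simpa only [Complex.real_smul] using hpl) hr
  simp only [Complex.real_smul, hrescale] at hq
  refine ⟨fun i => ⟨hdiag i, r i, hr i, hr_eq i⟩, ⟨q, hq0, hq1, hq⟩, ?_⟩
  have hmem := (convex_convexHull ℝ (numRange (V * Q))).sum_mem (fun i _ => hq0 i) hq1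
    (fun i _ => subset_convexHull ℝ _ ⟨x i, hx.1 i, rfl⟩)
  simpa only [Complex.real_smul, hq] using hmem
end

section
/- Let U := diag(1, i) ⊗ diag(1, i), the 4×4 diagonal matrix indexed by pairs from Fin 2 × Fin 2 with diagonal entries D_{(1,1)} = 1, D_{(1,2)} = D_{(2,1)} = i, D_{(2,2)} = −1. Then 1/2 is the least element of the set { |⟨ψ1⊗ψ2, U(ψ1⊗ψ2)⟩| : ψ1, ψ2 ∈ ℂ², ‖ψ1‖ = ‖ψ2‖ = 1 }; in particular |⟨ψ1⊗ψ2, U(ψ1⊗ψ2)⟩| ≥ 1/2 for all unit ψ1, ψ2 ∈ ℂ², with equality attained (e.g. at ψ1 = ψ2 = (1/√2, 1/√2)). That is, z_{2:2}(U) = 1/2. -/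
open scoped ComplexInnerProductSpace Kronecker Matrix

/-- The matrix `U = diag(1, i) ⊗ diag(1, i)`, a 4×4 diagonal matrix indexed by
`Fin 2 × Fin 2` with diagonal entries `1, i, i, -1`. -/
noncomputable def diagExample : Matrix (Fin 2 × Fin 2) (Fin 2 × Fin 2) ℂ :=
  (Matrix.diagonal ![1, Complex.I]) ⊗ₖ (Matrix.diagonal ![1, Complex.I])

/-!
On product vectors the expectation of `A ⊗ B` factors as `⟨ψ1, Aψ1⟩⟨ψ2, Bψ2⟩`. For
`D = diag(1, i)` and a unit `ψ ∈ ℂ²`, `⟨ψ, Dψ⟩ = p + (1 - p) i` with `p = |ψ₀|²`, whose squared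
modulus `p² + (1 - p)²` is at least `1/2`, with equality at `p = 1/2`. Hence every value of
`|⟨ψ1⊗ψ2, U(ψ1⊗ψ2)⟩|` is at least `1/2`, attained when both factors are balanced.
-/

open Complex Matrix

theorem inner_tensorVec_toEuclideanLin_kronecker {d1 d2 : ℕ} (A : Matrix (Fin d1) (Fin d1) ℂ)
    (B : Matrix (Fin d2) (Fin d2) ℂ) (φ1 ψ1 : EuclideanSpace ℂ (Fin d1))
    (φ2 ψ2 : EuclideanSpace ℂ (Fin d2)) :
    ⟪tensorVec φ1 φ2, toEuclideanLin (A ⊗ₖ B) (tensorVec ψ1 ψ2)⟫ =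
      ⟪φ1, toEuclideanLin A ψ1⟫ * ⟪φ2, toEuclideanLin B ψ2⟫ := by
  simp only [tensorVec, PiLp.inner_apply, ofLp_toLpLin, toLin'_apply, RCLike.inner_apply,
    Fintype.sum_prod_type, mulVec, dotProduct, kroneckerMap_apply, Finset.sum_mul_sum, map_mul]
  refine Finset.sum_congr rfl fun i _ => Finset.sum_congr rfl fun j _ => ?_
  rw [mul_mul_mul_comm _ (starRingEnd ℂ _), Finset.sum_mul_sum]
  congr 1
  exact Finset.sum_congr rfl fun k _ => Finset.sum_congr rfl fun l _ => mul_mul_mul_comm ..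

theorem inner_toEuclideanLin_diagonal_self {ι : Type*} [Fintype ι] [DecidableEq ι] (a : ι → ℂ)
    (ψ : EuclideanSpace ℂ ι) :
    ⟪ψ, toEuclideanLin (diagonal a) ψ⟫ = ∑ i, ((‖ψ i‖ ^ 2 : ℝ) : ℂ) * a i := by
  simp only [PiLp.inner_apply, ofLp_toLpLin, toLin'_apply, RCLike.inner_apply, mulVec_diagonal]
  refine Finset.sum_congr rfl fun i _ => ?_
  rw [ofReal_pow, ← Complex.mul_conj']
  ring

theorem half_le_normSq_add_mul_I {a b : ℝ} (hab : a + b = 1) : 1 / 2 ≤ normSq (a + b * I) := by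
  rw [normSq_add_mul_I]
  nlinarith [sq_nonneg (a - b)]

theorem half_le_sq_norm_inner_diagonal_one_I {ψ : EuclideanSpace ℂ (Fin 2)} (hψ : ‖ψ‖ = 1) :
    1 / 2 ≤ ‖⟪ψ, toEuclideanLin (diagonal ![1, I]) ψ⟫‖ ^ 2 := by
  have hsum : ‖ψ 0‖ ^ 2 + ‖ψ 1‖ ^ 2 = 1 := by
    simpa [Fin.sum_univ_two, hψ] using (EuclideanSpace.norm_sq_eq ψ).symm
  rw [inner_toEuclideanLin_diagonal_self, Fin.sum_univ_two, Complex.sq_norm]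
  simpa using half_le_normSq_add_mul_I hsum

theorem half_le_norm_inner_tensorVec_diagExample {ψ1 ψ2 : EuclideanSpace ℂ (Fin 2)}
    (h1 : ‖ψ1‖ = 1) (h2 : ‖ψ2‖ = 1) :
    1 / 2 ≤ ‖⟪tensorVec ψ1 ψ2, toEuclideanLin diagExample (tensorVec ψ1 ψ2)⟫‖ := by
  rw [diagExample, inner_tensorVec_toEuclideanLin_kronecker, norm_mul]
  have hsq := mul_le_mul (half_le_sq_norm_inner_diagonal_one_I h1)
    (half_le_sq_norm_inner_diagonal_one_I h2) (by norm_num) (sq_nonneg _)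
  rw [← mul_pow] at hsq
  exact (pow_le_pow_iff_left₀ (by norm_num) (by positivity) two_ne_zero).mp (by linarith)

theorem sq_norm_inv_sqrt_two : ‖((√2 : ℝ) : ℂ)⁻¹‖ ^ 2 = 1 / 2 := by
  rw [norm_inv, inv_pow, norm_real, Real.norm_of_nonneg (Real.sqrt_nonneg 2),
    Real.sq_sqrt zero_le_two, one_div]

theorem norm_inner_tensorVec_diagExample_const_inv_sqrt_two :
    let v : EuclideanSpace ℂ (Fin 2) := WithLp.toLp 2 (fun _ => ((Real.sqrt 2 : ℂ))⁻¹)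
    ‖⟪tensorVec v v, toEuclideanLin diagExample (tensorVec v v)⟫‖ = 1 / 2 := by
  intro v
  have hv : ∀ i, ‖v i‖ ^ 2 = 1 / 2 := fun _ => sq_norm_inv_sqrt_two
  rw [diagExample, inner_tensorVec_toEuclideanLin_kronecker, norm_mul, ← sq, Complex.sq_norm,
    inner_toEuclideanLin_diagonal_self, Fin.sum_univ_two, hv]
  simp only [cons_val_zero, cons_val_one, mul_one, normSq_add_mul_I]
  norm_num

theorem norm_toLp_const_inv_sqrt_two : ‖(WithLp.toLp 2 (fun _ => ((Real.sqrt 2 : ℂ))⁻¹) :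
    EuclideanSpace ℂ (Fin 2))‖ = 1 := by
  rw [EuclideanSpace.norm_eq, Fin.sum_univ_two]
  simp only [sq_norm_inv_sqrt_two]
  norm_num

/-- For `U = diag(1,i) ⊗ diag(1,i)`, the value `1/2` is the least element
of `{ |⟨ψ1⊗ψ2, U(ψ1⊗ψ2)⟩| : ‖ψ1‖ = ‖ψ2‖ = 1 }`, i.e. `z_{2:2}(U) = 1/2`; in particular
the bound is attained at `ψ1 = ψ2 = (1/√2, 1/√2)`. -/
theorem stmt15 :
    IsLeast
      {r : ℝ | ∃ ψ1 ψ2 : EuclideanSpace ℂ (Fin 2), ‖ψ1‖ = 1 ∧ ‖ψ2‖ = 1 ∧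
        r = ‖⟪tensorVec ψ1 ψ2, Matrix.toEuclideanLin diagExample (tensorVec ψ1 ψ2)⟫‖}
      (1 / 2) ∧
    (let v : EuclideanSpace ℂ (Fin 2) := WithLp.toLp 2 (fun _ => ((Real.sqrt 2 : ℂ))⁻¹)
     ‖⟪tensorVec v v, Matrix.toEuclideanLin diagExample (tensorVec v v)⟫‖ = 1 / 2) := by
  have hmin := norm_inner_tensorVec_diagExample_const_inv_sqrt_two
  refine ⟨⟨⟨_, _, norm_toLp_const_inv_sqrt_two, norm_toLp_const_inv_sqrt_two, hmin.symm⟩, ?_⟩,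
    hmin⟩
  rintro r ⟨ψ1, ψ2, h1, h2, rfl⟩
  exact half_le_norm_inner_tensorVec_diagExample h1 h2
end
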